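/- arXiv:1309.6007 — 5 statements merged into one kernel-verified Lean document; each statement's English description precedes it below -/
import Mathlib

section
/- Let V ∈ ℝ and t₀ ∈ ℝ, and let x, y, ψ, r, φ : ℝ → ℝ be functions such that: x has derivative V·cos(ψ(t₀)) at t₀, y has derivative V·sin(ψ(t₀)) at t₀, r and φ are differentiable at t₀, r(t₀) > 0, and x(t) = r(t)·cos(φ(t)) and y(t) = r(t)·sin(φ(t)) for all t in a neighborhood of t₀. Then φ'(t₀) = −(V/r(t₀))·sin(π − φ(t₀) + ψ(t₀)). Consequently, if in addition ψ has derivative u₀ at t₀, then the bearing angle function θ(t) = π − φ(t) + ψ(t) has derivative (V/r(t₀))·sin(θ(t₀)) + u₀ at t₀. -/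
/-!
Differentiating `x = r cos φ`, `y = r sin φ`, the combination `y' cos φ - x' sin φ` cancels `r'`
and leaves `r φ'`; for the velocity `(x', y') = V (cos ψ, sin ψ)` it equals
`V sin (ψ - φ) = -V sin θ`.
-/

open Real Filter Topology

theorem mul_angle_deriv_eq_of_polar {x y r φ : ℝ → ℝ} {x' y' φ' t : ℝ}
    (hx : HasDerivAt x x' t) (hy : HasDerivAt y y' t)
    (hr : DifferentiableAt ℝ r t) (hφ : HasDerivAt φ φ' t)
    (hxeq : x =ᶠ[𝓝 t] fun s => r s * cos (φ s))
    (hyeq : y =ᶠ[𝓝 t] fun s => r s * sin (φ s)) :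
    r t * φ' = y' * cos (φ t) - x' * sin (φ t) := by
  have hx' : x' = deriv r t * cos (φ t) + r t * (-sin (φ t) * φ') :=
    hx.unique ((hr.hasDerivAt.mul hφ.cos).congr_of_eventuallyEq hxeq)
  have hy' : y' = deriv r t * sin (φ t) + r t * (cos (φ t) * φ') :=
    hy.unique ((hr.hasDerivAt.mul hφ.sin).congr_of_eventuallyEq hyeq)
  rw [hx', hy']
  linear_combination -(r t * φ') * sin_sq_add_cos_sq (φ t)

theorem sin_pi_sub_add (a b : ℝ) : sin (π - a + b) = sin (a - b) := by
  rw [← sin_pi_sub (a - b)]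
  ring_nf

/-- Transformation of the dynamics to polar coordinates: `φ̇ = -(V/r) sin θ`
and consequently `θ̇ = (V/r) sin θ + u` for the bearing angle `θ = π - φ + ψ`. -/
theorem bearing_angle_dynamics (V t₀ u₀ : ℝ) (x y ψ r φ : ℝ → ℝ)
    (hx : HasDerivAt x (V * Real.cos (ψ t₀)) t₀)
    (hy : HasDerivAt y (V * Real.sin (ψ t₀)) t₀)
    (hr : DifferentiableAt ℝ r t₀) (hφ : DifferentiableAt ℝ φ t₀)
    (hr0 : 0 < r t₀)
    (hxeq : ∀ᶠ t in nhds t₀, x t = r t * Real.cos (φ t))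
    (hyeq : ∀ᶠ t in nhds t₀, y t = r t * Real.sin (φ t)) :
    deriv φ t₀ = -(V / r t₀) * Real.sin (Real.pi - φ t₀ + ψ t₀) ∧
      (HasDerivAt ψ u₀ t₀ →
        HasDerivAt (fun t => Real.pi - φ t + ψ t)
          (V / r t₀ * Real.sin (Real.pi - φ t₀ + ψ t₀) + u₀) t₀) := by
  have hangular : r t₀ * deriv φ t₀ = -V * sin (π - φ t₀ + ψ t₀) := by
    rw [mul_angle_deriv_eq_of_polar hx hy hr hφ.hasDerivAt hxeq hyeq, sin_pi_sub_add, sin_sub]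
    ring
  have hφ' : deriv φ t₀ = -(V / r t₀) * sin (π - φ t₀ + ψ t₀) := by
    rw [← mul_div_cancel_left₀ (deriv φ t₀) hr0.ne', hangular]
    ring
  refine ⟨hφ', fun hψ => ?_⟩
  exact (((hasDerivAt_const t₀ π).sub hφ.hasDerivAt).add hψ).congr_deriv (by rw [hφ']; ring)
end

section
/- Let k > 0, r_a > 0 with k ≥ 1/r_a, and set r_s = √(r_a² − 1/k²). Then the equation 1/r = (k/r_s)·√(r_s² − r²) has a solution r ∈ (0, r_s) if and only if k·r_s ≥ 2, which holds if and only if k ≥ √5/r_a. In particular, for k ∈ (1/r_a, √5/r_a) no such solution exists. -/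
/-!
Squaring, and substituting `x = r²`, turns the stationarity equation into
`x (r_s² - x) = r_s² / k²` with `x ∈ (0, r_s²)`. The parabola `x (r_s² - x)` takes exactly the
values in `(0, r_s⁴ / 4]` there, so a solution exists iff `4 ≤ (k r_s)²`. Finally
`(k r_s)² = (k r_a)² - 1`, so this is `5 ≤ (k r_a)²`.
-/

open Set Real

theorem exists_mem_Ioo_mul_sub_eq_iff {a b : ℝ} (ha : 0 ≤ a) :
    (∃ x ∈ Ioo 0 a, x * (a - x) = b) ↔ 0 < b ∧ 4 * b ≤ a ^ 2 := by
  constructor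
  · rintro ⟨x, ⟨hx0, hxa⟩, rfl⟩
    exact ⟨mul_pos hx0 (sub_pos.mpr hxa), by nlinarith [sq_nonneg (a - 2 * x)]⟩
  · rintro ⟨hb, hba⟩
    have ha' : 0 < a := by nlinarith
    set d := √(a ^ 2 - 4 * b)
    have hd0 : 0 ≤ d := sqrt_nonneg _
    have hd2 : d ^ 2 = a ^ 2 - 4 * b := sq_sqrt (by linarith)
    have hda : d < a := by nlinarith
    refine ⟨(a - d) / 2, ⟨by linarith, by linarith⟩, ?_⟩
    linear_combination (-1 / 4 : ℝ) * hd2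

theorem one_div_eq_div_mul_sqrt_iff {k r s : ℝ} (hk : 0 < k) (hr : 0 < r) (hrs : r < s) :
    1 / r = k / s * √(s ^ 2 - r ^ 2) ↔ r ^ 2 * (s ^ 2 - r ^ 2) = s ^ 2 / k ^ 2 := by
  have hs : 0 < s := hr.trans hrs
  have hw : √(s ^ 2 - r ^ 2) ^ 2 = s ^ 2 - r ^ 2 := sq_sqrt (by nlinarith)
  calc 1 / r = k / s * √(s ^ 2 - r ^ 2) ↔ s = k * r * √(s ^ 2 - r ^ 2) := by
        rw [div_mul_eq_mul_div, div_eq_div_iff hr.ne' hs.ne']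
        constructor <;> intro h <;> linarith
    _ ↔ s ^ 2 = (k * r * √(s ^ 2 - r ^ 2)) ^ 2 := (sq_eq_sq₀ hs.le (by positivity)).symm
    _ ↔ r ^ 2 * (s ^ 2 - r ^ 2) = s ^ 2 / k ^ 2 := by
        rw [eq_div_iff (by positivity), mul_pow, mul_pow, hw]
        constructor <;> intro h <;> linarith

theorem exists_mem_Ioo_one_div_eq_div_mul_sqrt_iff_sq {k s : ℝ} (hk : 0 < k) (hs : 0 ≤ s) :
    (∃ r ∈ Ioo (0 : ℝ) s, 1 / r = k / s * √(s ^ 2 - r ^ 2)) ↔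
      ∃ x ∈ Ioo 0 (s ^ 2), x * (s ^ 2 - x) = s ^ 2 / k ^ 2 := by
  constructor
  · rintro ⟨r, ⟨hr0, hrs⟩, h⟩
    exact ⟨r ^ 2, ⟨by positivity, by nlinarith⟩, (one_div_eq_div_mul_sqrt_iff hk hr0 hrs).mp h⟩
  · rintro ⟨x, ⟨hx0, hxs⟩, h⟩
    have hr0 : 0 < √x := sqrt_pos.mpr hx0
    have hrs : √x < s := (sqrt_lt' (by nlinarith)).mpr hxs
    refine ⟨√x, ⟨hr0, hrs⟩, (one_div_eq_div_mul_sqrt_iff hk hr0 hrs).mpr ?_⟩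
    rwa [sq_sqrt hx0.le]

theorem exists_mem_Ioo_one_div_eq_div_mul_sqrt_iff {k s : ℝ} (hk : 0 < k) (hs : 0 ≤ s) :
    (∃ r ∈ Ioo (0 : ℝ) s, 1 / r = k / s * √(s ^ 2 - r ^ 2)) ↔ 2 ≤ k * s := by
  rw [exists_mem_Ioo_one_div_eq_div_mul_sqrt_iff_sq hk hs,
    exists_mem_Ioo_mul_sub_eq_iff (sq_nonneg s), div_pos_iff_of_pos_right (by positivity),
    mul_div_assoc', div_le_iff₀ (by positivity)]
  constructor
  · rintro ⟨hs0, h⟩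
    have : 4 ≤ (k * s) ^ 2 := le_of_mul_le_mul_left (by nlinarith) hs0
    nlinarith [mul_nonneg hk.le hs]
  · intro h
    have hs0 : 0 < s ^ 2 := pow_pos (pos_of_mul_pos_right (by linarith) hk.le) 2
    have : 4 ≤ (k * s) ^ 2 := by nlinarith
    exact ⟨hs0, by nlinarith [mul_le_mul_of_nonneg_left this hs0.le]⟩

theorem two_le_mul_sqrt_sub_iff {k a : ℝ} (hk : 0 < k) (ha : 0 < a) :
    2 ≤ k * √(a ^ 2 - 1 / k ^ 2) ↔ √5 / a ≤ k := by
  rw [← div_le_iff₀' hk, le_sqrt' (by positivity), div_le_iff₀ ha, sqrt_le_left (by positivity),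
    div_pow, le_sub_iff_add_le, ← add_div, div_le_iff₀ (by positivity)]
  constructor <;> intro h <;> linarith

theorem inner_stationary_existence_general (k ra rs : ℝ) (hk : 0 < k) (hra : 0 < ra)
    (hrs : rs = Real.sqrt (ra ^ 2 - 1 / k ^ 2)) :
    ((∃ r ∈ Set.Ioo (0 : ℝ) rs, 1 / r = (k / rs) * Real.sqrt (rs ^ 2 - r ^ 2)) ↔
        2 ≤ k * rs) ∧
    (2 ≤ k * rs ↔ Real.sqrt 5 / ra ≤ k) ∧
    (1 / ra < k → k < Real.sqrt 5 / ra →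
      ¬ ∃ r ∈ Set.Ioo (0 : ℝ) rs, 1 / r = (k / rs) * Real.sqrt (rs ^ 2 - r ^ 2)) := by
  have hexists := exists_mem_Ioo_one_div_eq_div_mul_sqrt_iff hk (hrs ▸ sqrt_nonneg _)
  have hgain : 2 ≤ k * rs ↔ √5 / ra ≤ k := hrs ▸ two_le_mul_sqrt_sub_iff hk hra
  exact ⟨hexists, hgain, fun _ hlt h => hlt.not_ge (hgain.mp (hexists.mp h))⟩

/-- With `r_s = √(r_a² - 1/k²)`, an inner stationary radius exists iff `k·r_s ≥ 2`,
which holds iff `k ≥ √5/r_a`; in particular for `k ∈ (1/r_a, √5/r_a)` none exists. -/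
theorem inner_stationary_existence (k ra rs : ℝ) (hk : 0 < k) (hra : 0 < ra)
    (hk1 : 1 / ra ≤ k) (hrs : rs = Real.sqrt (ra ^ 2 - 1 / k ^ 2)) :
    ((∃ r ∈ Set.Ioo (0 : ℝ) rs, 1 / r = (k / rs) * Real.sqrt (rs ^ 2 - r ^ 2)) ↔
        2 ≤ k * rs) ∧
    (2 ≤ k * rs ↔ Real.sqrt 5 / ra ≤ k) ∧
    (1 / ra < k → k < Real.sqrt 5 / ra →
      ¬ ∃ r ∈ Set.Ioo (0 : ℝ) rs, 1 / r = (k / rs) * Real.sqrt (rs ^ 2 - r ^ 2)) :=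
  inner_stationary_existence_general k ra rs hk hra hrs
end

section
/- Let k, V, r_s, σ > 0, let u(r,θ) = kV·cos θ − (kV/r)·√(r² − r_s²) for r ≥ r_s and u(r,θ) = kV·cos θ + (kV/r_s)·√(r_s² − r²) for 0 < r < r_s, and let 𝒱(r,θ) = (k/V)·|r − r_s| + (θ/V)·sgn(r − r_s) + 2π/V. Then for every r > 0 with r ≠ r_s and every θ, 𝒱 is differentiable at (r,θ) with ∂𝒱/∂r = (k/V)·sgn(r − r_s), ∂𝒱/∂θ = sgn(r − r_s)/V and ∂²𝒱/∂θ² = 0, and the generator expression (−V·cos θ)·∂𝒱/∂r + ((V·sin θ)/r + u(r,θ))·∂𝒱/∂θ + (k²σ²/2)·∂²𝒱/∂θ² equals Λ(r,θ), where Λ(r,θ) = (sin θ)/r − (k/r)·√(r² − r_s²) for r > r_s and Λ(r,θ) = −(sin θ)/r − (k/r_s)·√(r_s² − r²) for 0 < r < r_s. -/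
open Filter Topology

/-! Off the circle `r = r_s` the sign of `r - r_s` is locally constant, so `𝒱` is locally the affine
function `(k/V)·s·(r - r_s) + (s/V)·θ + 2π/V` with `s = sgn(r - r_s) = ±1`. Its partial derivatives
are therefore the constants `k s / V` and `s / V`, the diffusion term vanishes, and `ℒ𝒱` reduces to
an algebraic identity on each side of the circle. -/

namespace Real

theorem abs_eq_sign_mul_self (x : ℝ) : |x| = Real.sign x * x := by
  rcases lt_trichotomy x 0 with hx | rfl | hx
  · rw [abs_of_neg hx, sign_of_neg hx]; ring
  · simp
  · rw [abs_of_pos hx, sign_of_pos hx, one_mul]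

theorem eventually_sign_eq {a : ℝ} (ha : a ≠ 0) : ∀ᶠ x in 𝓝 a, Real.sign x = Real.sign a := by
  rcases ha.lt_or_gt with ha | ha
  · filter_upwards [Iio_mem_nhds ha] with x hx
    rw [sign_of_neg hx, sign_of_neg ha]
  · filter_upwards [Ioi_mem_nhds ha] with x hx
    rw [sign_of_pos hx, sign_of_pos ha]

end Real

section LocallyAffine

variable {f : ℝ × ℝ → ℝ} {x y a b c : ℝ}

theorem differentiableAt_of_eventuallyEq_affine
    (h : f =ᶠ[𝓝 (x, y)] fun p => a * p.1 + b * p.2 + c) : DifferentiableAt ℝ f (x, y) := by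
  have : DifferentiableAt ℝ (fun p : ℝ × ℝ => a * p.1 + b * p.2 + c) (x, y) := by fun_prop
  exact this.congr_of_eventuallyEq h

theorem hasDerivAt_fst_of_eventuallyEq_affine
    (h : f =ᶠ[𝓝 (x, y)] fun p => a * p.1 + b * p.2 + c) :
    HasDerivAt (fun x' => f (x', y)) a x := by
  have hline : (fun x' => f (x', y)) =ᶠ[𝓝 x] fun x' => a * x' + (b * y + c) := by
    filter_upwards [(Continuous.prodMk_left y).continuousAt.eventually h] with x' hx'
    rw [hx']; ring
  have : HasDerivAt (fun x' => a * x' + (b * y + c)) a x := by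
    simpa using ((hasDerivAt_id x).const_mul a).add_const (b * y + c)
  exact this.congr_of_eventuallyEq hline

theorem hasDerivAt_snd_of_eventuallyEq_affine
    (h : f =ᶠ[𝓝 (x, y)] fun p => a * p.1 + b * p.2 + c) :
    HasDerivAt (fun y' => f (x, y')) b y := by
  have hline : (fun y' => f (x, y')) =ᶠ[𝓝 y] fun y' => b * y' + (a * x + c) := by
    filter_upwards [(Continuous.prodMk_right x).continuousAt.eventually h] with y' hy'
    rw [hy']; ring
  have : HasDerivAt (fun y' => b * y' + (a * x + c)) b y := by
    simpa using ((hasDerivAt_id y).const_mul b).add_const (a * x + c)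
  exact this.congr_of_eventuallyEq hline

end LocallyAffine

theorem deriv_deriv_eq_zero_of_hasDerivAt_const {g : ℝ → ℝ} {b : ℝ}
    (hg : ∀ t, HasDerivAt g b t) (t : ℝ) : deriv (deriv g) t = 0 := by
  rw [show deriv g = fun _ => b from funext fun t => (hg t).deriv, deriv_const]

theorem lyapunov_eventuallyEq_affine {k V rs r θ : ℝ} (W : ℝ → ℝ → ℝ)
    (hW : ∀ r θ, W r θ =
      (k / V) * |r - rs| + (θ / V) * Real.sign (r - rs) + 2 * Real.pi / V)
    (hne : r ≠ rs) :
    (fun p : ℝ × ℝ => W p.1 p.2) =ᶠ[𝓝 (r, θ)] fun p =>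
      k / V * Real.sign (r - rs) * p.1 + Real.sign (r - rs) / V * p.2 +
        (2 * Real.pi / V - k / V * Real.sign (r - rs) * rs) := by
  have hsign : ∀ᶠ p in 𝓝 (r, θ), Real.sign (p.1 - rs) = Real.sign (r - rs) :=
    ((continuous_fst.sub continuous_const).tendsto (r, θ)).eventually
      (Real.eventually_sign_eq (sub_ne_zero.2 hne))
  filter_upwards [hsign] with p hp
  rw [hW, Real.abs_eq_sign_mul_self, hp]
  ring

theorem generator_of_lyapunov_general (k V rs σ : ℝ)
    (hV : 0 < V)
    (u : ℝ → ℝ → ℝ)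
    (hu_out : ∀ r θ, rs ≤ r →
      u r θ = k * V * Real.cos θ - (k * V / r) * Real.sqrt (r ^ 2 - rs ^ 2))
    (hu_in : ∀ r θ, 0 < r → r < rs →
      u r θ = k * V * Real.cos θ + (k * V / rs) * Real.sqrt (rs ^ 2 - r ^ 2))
    (W : ℝ → ℝ → ℝ)
    (hW : ∀ r θ, W r θ =
      (k / V) * |r - rs| + (θ / V) * Real.sign (r - rs) + 2 * Real.pi / V)
    (Λ : ℝ → ℝ → ℝ)
    (hΛ_out : ∀ r θ, rs < r →
      Λ r θ = Real.sin θ / r - (k / r) * Real.sqrt (r ^ 2 - rs ^ 2))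
    (hΛ_in : ∀ r θ, 0 < r → r < rs →
      Λ r θ = -(Real.sin θ / r) - (k / rs) * Real.sqrt (rs ^ 2 - r ^ 2)) :
    ∀ r θ : ℝ, 0 < r → r ≠ rs →
      DifferentiableAt ℝ (fun p : ℝ × ℝ => W p.1 p.2) (r, θ) ∧
      HasDerivAt (fun r' => W r' θ) ((k / V) * Real.sign (r - rs)) r ∧
      HasDerivAt (fun θ' => W r θ') (Real.sign (r - rs) / V) θ ∧
      deriv (deriv (fun θ' => W r θ')) θ = 0 ∧
      (-V * Real.cos θ) * ((k / V) * Real.sign (r - rs)) +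
          (V * Real.sin θ / r + u r θ) * (Real.sign (r - rs) / V) +
          (k ^ 2 * σ ^ 2 / 2) * deriv (deriv (fun θ' => W r θ')) θ
        = Λ r θ := by
  intro r θ hr hne
  have hloc : ∀ θ', _ := fun θ' => lyapunov_eventuallyEq_affine (θ := θ') W hW hne
  have hdθ : ∀ θ', HasDerivAt (fun θ' => W r θ') (Real.sign (r - rs) / V) θ' :=
    fun θ' => hasDerivAt_snd_of_eventuallyEq_affine (hloc θ')
  have hd2 := deriv_deriv_eq_zero_of_hasDerivAt_const hdθ θ
  refine ⟨differentiableAt_of_eventuallyEq_affine (hloc θ),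
    hasDerivAt_fst_of_eventuallyEq_affine (hloc θ), hdθ θ, hd2, ?_⟩
  rw [hd2, mul_zero, add_zero]
  rcases hne.lt_or_gt with hlt | hgt
  · rw [hΛ_in r θ hr hlt, hu_in r θ hr hlt, Real.sign_of_neg (sub_neg.2 hlt)]
    field_simp
    ring
  · rw [hΛ_out r θ hgt, hu_out r θ hgt.le, Real.sign_of_pos (sub_pos.2 hgt)]
    field_simp
    ring

/-- Explicit computation of the generator of the noisy closed-loop diffusion applied
to the Lyapunov function `𝒱(r,θ) = (k/V)|r - r_s| + (θ/V)·sgn(r - r_s) + 2π/V`: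
off `r = r_s` the function is differentiable with the indicated partial derivatives,
and `ℒ𝒱(r,θ) = Λ(r,θ)` with
`Λ(r,θ) = sinθ/r - (k/r)√(r² - r_s²)` for `r > r_s` and
`Λ(r,θ) = -sinθ/r - (k/r_s)√(r_s² - r²)` for `0 < r < r_s`. -/
theorem generator_of_lyapunov (k V rs σ : ℝ)
    (hk : 0 < k) (hV : 0 < V) (hrs : 0 < rs) (hσ : 0 < σ)
    (u : ℝ → ℝ → ℝ)
    (hu_out : ∀ r θ, rs ≤ r →
      u r θ = k * V * Real.cos θ - (k * V / r) * Real.sqrt (r ^ 2 - rs ^ 2))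
    (hu_in : ∀ r θ, 0 < r → r < rs →
      u r θ = k * V * Real.cos θ + (k * V / rs) * Real.sqrt (rs ^ 2 - r ^ 2))
    (W : ℝ → ℝ → ℝ)
    (hW : ∀ r θ, W r θ =
      (k / V) * |r - rs| + (θ / V) * Real.sign (r - rs) + 2 * Real.pi / V)
    (Λ : ℝ → ℝ → ℝ)
    (hΛ_out : ∀ r θ, rs < r →
      Λ r θ = Real.sin θ / r - (k / r) * Real.sqrt (r ^ 2 - rs ^ 2))
    (hΛ_in : ∀ r θ, 0 < r → r < rs →
      Λ r θ = -(Real.sin θ / r) - (k / rs) * Real.sqrt (rs ^ 2 - r ^ 2)) :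
    ∀ r θ : ℝ, 0 < r → r ≠ rs →
      DifferentiableAt ℝ (fun p : ℝ × ℝ => W p.1 p.2) (r, θ) ∧
      HasDerivAt (fun r' => W r' θ) ((k / V) * Real.sign (r - rs)) r ∧
      HasDerivAt (fun θ' => W r θ') (Real.sign (r - rs) / V) θ ∧
      deriv (deriv (fun θ' => W r θ')) θ = 0 ∧
      (-V * Real.cos θ) * ((k / V) * Real.sign (r - rs)) +
          (V * Real.sin θ / r + u r θ) * (Real.sign (r - rs) / V) +
          (k ^ 2 * σ ^ 2 / 2) * deriv (deriv (fun θ' => W r θ')) θ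
        = Λ r θ :=
  generator_of_lyapunov_general k V rs σ hV u hu_out hu_in W hW Λ hΛ_out hΛ_in
end

section
/- Let k > 0, r_a > 0 with k ≥ 1/r_a, and set r_s = √(r_a² − 1/k²). Define Λ(r,θ) = (sin θ)/r − (k/r)·√(r² − r_s²) for r > r_s. Then Λ(r,θ) ≤ 0 for every r ≥ r_a and every θ ∈ ℝ. -/
/-! Beyond the orbit, `r² - r_s² ≥ r_a² - r_s² = 1/k²`, so `k √(r² - r_s²) ≥ 1 ≥ sin θ`;
dividing by `r > 0` gives `Λ ≤ 0`. -/

open Real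

theorem one_div_sq_le_sq_of_one_div_le {a b : ℝ} (ha : 0 < a) (h : 1 / a ≤ b) :
    1 / b ^ 2 ≤ a ^ 2 := by
  have hb : 0 < b := (one_div_pos.2 ha).trans_le h
  rw [← one_div_pow]
  exact pow_le_pow_left₀ (one_div_pos.2 hb).le ((one_div_le ha hb).1 h) 2

theorem one_le_mul_sqrt_of_one_div_sq_le {k x : ℝ} (hk : 0 < k) (h : 1 / k ^ 2 ≤ x) :
    1 ≤ k * √x := by
  have hsqrt : 1 / k ≤ √x := (le_sqrt' (one_div_pos.2 hk)).2 (by rwa [one_div_pow])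
  calc 1 = k * (1 / k) := (mul_one_div_cancel hk.ne').symm
    _ ≤ k * √x := mul_le_mul_of_nonneg_left hsqrt hk.le

theorem sin_div_sub_div_mul_nonpos {r k s : ℝ} (θ : ℝ) (hr : 0 ≤ r) (h : 1 ≤ k * s) :
    sin θ / r - k / r * s ≤ 0 := by
  rw [div_mul_eq_mul_div, ← sub_div]
  exact div_nonpos_of_nonpos_of_nonneg (by linarith [sin_le_one θ]) hr

theorem generator_nonpositive_beyond_orbit_general (k ra rs : ℝ)
    (hra : 0 < ra) (hk1 : 1 / ra ≤ k)
    (hrs : rs = Real.sqrt (ra ^ 2 - 1 / k ^ 2))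
    (Λ : ℝ → ℝ → ℝ)
    (hΛ_out : ∀ r θ, rs < r →
      Λ r θ = Real.sin θ / r - (k / r) * Real.sqrt (r ^ 2 - rs ^ 2)) :
    ∀ r θ : ℝ, ra ≤ r → Λ r θ ≤ 0 := by
  intro r θ hr
  have hr0 : 0 < r := hra.trans_le hr
  have hk : 0 < k := (one_div_pos.2 hra).trans_le hk1
  have hinv : 1 / k ^ 2 ≤ ra ^ 2 := one_div_sq_le_sq_of_one_div_le hra hk1
  have hsq : ra ^ 2 ≤ r ^ 2 := pow_le_pow_left₀ hra.le hr 2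
  have hrs_sq : rs ^ 2 = ra ^ 2 - 1 / k ^ 2 := by rw [hrs, sq_sqrt (sub_nonneg.2 hinv)]
  have hrs_lt : rs < r := by
    rw [hrs, sqrt_lt' hr0]
    linarith [one_div_pos.2 (pow_pos hk 2)]
  rw [hΛ_out r θ hrs_lt]
  refine sin_div_sub_div_mul_nonpos θ hr0.le (one_le_mul_sqrt_of_one_div_sq_le hk ?_)
  linarith

/-- With `r_s = √(r_a² - 1/k²)`, the outer generator value
`Λ(r,θ) = sinθ/r - (k/r)√(r² - r_s²)` is nonpositive for every `r ≥ r_a`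
regardless of the bearing `θ`. -/
theorem generator_nonpositive_beyond_orbit (k ra rs : ℝ)
    (hk : 0 < k) (hra : 0 < ra) (hk1 : 1 / ra ≤ k)
    (hrs : rs = Real.sqrt (ra ^ 2 - 1 / k ^ 2))
    (Λ : ℝ → ℝ → ℝ)
    (hΛ_out : ∀ r θ, rs < r →
      Λ r θ = Real.sin θ / r - (k / r) * Real.sqrt (r ^ 2 - rs ^ 2)) :
    ∀ r θ : ℝ, ra ≤ r → Λ r θ ≤ 0 :=
  generator_nonpositive_beyond_orbit_general k ra rs hra hk1 hrs Λ hΛ_out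
end

section
/- Let k > 0, r_a > 0 with k ≥ 1/r_a, set r_s = √(r_a² − 1/k²), and let 0 < ε < k. Define r_{a,ε} = (ε + √(k²·r_a²·(k² − ε²) + ε²))/(k² − ε²), and Λ(r,θ) = (sin θ)/r − (k/r)·√(r² − r_s²) for r > r_s. Then: (i) for every r ≥ r_{a,ε} and every θ ∈ ℝ, Λ(r,θ) ≤ (1/r)·(1 − k·√(r² − r_s²)) ≤ −ε; (ii) r_{a,ε} > r_a; and (iii) r_{a,ε} → r_a as ε → 0⁺. -/
/-!
Write `ρ = r_{a,ε}`. It is the larger root of `(k² - ε²) r² - 2 ε r - k² r_a²`, so this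
quadratic is nonnegative for `r ≥ ρ`. Since `k² r_s² = k² r_a² - 1`, that is exactly
`(1 + ε r)² ≤ k² (r² - r_s²)`, i.e. `1 + ε r ≤ k √(r² - r_s²)`, which together with
`sin θ ≤ 1` gives the bound. At `r = r_a` the quadratic equals `-ε² r_a² - 2 ε r_a < 0`, so
`r_a < ρ`; and `ρ` depends continuously on `ε` near `0`, where it equals `r_a`.
-/

open Filter Topology

section QuadraticRoot

variable {a b c x : ℝ}

theorem quadratic_nonneg_of_root_le (ha : 0 < a) (hD : 0 ≤ c * a + b ^ 2)
    (hx : (b + √(c * a + b ^ 2)) / a ≤ x) : 0 ≤ a * x ^ 2 - 2 * b * x - c := by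
  have hsqrt : √(c * a + b ^ 2) ≤ a * x - b := by
    have := (div_le_iff₀ ha).mp hx
    linarith
  have hsq : c * a + b ^ 2 ≤ (a * x - b) ^ 2 := by
    rw [← Real.sq_sqrt hD]
    exact pow_le_pow_left₀ (Real.sqrt_nonneg _) hsqrt 2
  have : 0 ≤ a * (a * x ^ 2 - 2 * b * x - c) := by nlinarith
  exact nonneg_of_mul_nonneg_right (by linarith) ha

theorem lt_root_of_quadratic_neg (ha : 0 < a)
    (hx : a * x ^ 2 - 2 * b * x - c < 0) : x < (b + √(c * a + b ^ 2)) / a := by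
  have habs : |a * x - b| < √(c * a + b ^ 2) := by
    rw [← Real.sqrt_sq_eq_abs]
    exact Real.sqrt_lt_sqrt (sq_nonneg _) (by nlinarith)
  rw [lt_div_iff₀ ha]
  linarith [le_abs_self (a * x - b)]

end QuadraticRoot

theorem le_mul_sqrt_of_sq_le {x k y : ℝ} (hk : 0 ≤ k) (h : x ^ 2 ≤ k ^ 2 * y) :
    x ≤ k * √y := by
  calc x ≤ |x| := le_abs_self x
    _ ≤ √(k ^ 2 * y) := Real.abs_le_sqrt h
    _ = k * √y := by rw [Real.sqrt_mul (sq_nonneg k), Real.sqrt_sq hk]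

theorem tendsto_root_nhds_zero {k ra : ℝ} (hk : k ≠ 0) (hra : 0 ≤ ra) :
    Tendsto (fun ε : ℝ ↦ (ε + √(k ^ 2 * ra ^ 2 * (k ^ 2 - ε ^ 2) + ε ^ 2)) /
      (k ^ 2 - ε ^ 2)) (𝓝 0) (𝓝 ra) := by
  have hc : ContinuousAt (fun ε : ℝ ↦ (ε + √(k ^ 2 * ra ^ 2 * (k ^ 2 - ε ^ 2) + ε ^ 2)) /
      (k ^ 2 - ε ^ 2)) 0 :=
    ContinuousAt.div (by fun_prop) (by fun_prop) (by simpa using hk)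
  have h0 : ((0 : ℝ) + √(k ^ 2 * ra ^ 2 * (k ^ 2 - 0 ^ 2) + 0 ^ 2)) / (k ^ 2 - 0 ^ 2) = ra := by
    rw [show k ^ 2 * ra ^ 2 * (k ^ 2 - 0 ^ 2) + 0 ^ 2 = (k ^ 2 * ra) ^ 2 by ring,
      Real.sqrt_sq (by positivity)]
    field_simp
    ring
  convert hc.tendsto
  exact h0.symm

theorem one_div_mul_one_sub_le_neg {r ε s : ℝ} (hr : 0 < r) (h : 1 + ε * r ≤ s) :
    1 / r * (1 - s) ≤ -ε := by
  rw [div_mul_eq_mul_div, one_mul, div_le_iff₀ hr]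
  linarith

theorem sin_div_sub_div_mul_le (θ : ℝ) {r k s : ℝ} (hr : 0 < r) :
    Real.sin θ / r - k / r * s ≤ 1 / r * (1 - k * s) := by
  have hsin : Real.sin θ / r ≤ 1 / r := by gcongr; exact Real.sin_le_one θ
  linarith [show 1 / r * (1 - k * s) = 1 / r - k / r * s by ring]

theorem mul_sq_sqrt_sq_sub_one_div_sq {k ra : ℝ} (hk : 0 < k) (hra : 0 < ra)
    (hk1 : 1 / ra ≤ k) : k ^ 2 * √(ra ^ 2 - 1 / k ^ 2) ^ 2 = k ^ 2 * ra ^ 2 - 1 := by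
  have hkra : 1 ≤ k * ra := by linarith [(div_le_iff₀ hra).mp hk1]
  rw [Real.sq_sqrt (by rw [sub_nonneg, div_le_iff₀ (by positivity)]; nlinarith)]
  field_simp

/-- Beyond the explicit radius `r_{a,ε} = (ε + √(k²r_a²(k² - ε²) + ε²))/(k² - ε²)` the
generator value is at most `-ε` uniformly in `θ`; moreover `r_{a,ε} > r_a` and
`r_{a,ε} → r_a` as `ε → 0⁺`. -/
theorem generator_eps_bound_outer (k ra rs : ℝ)
    (hk : 0 < k) (hra : 0 < ra) (hk1 : 1 / ra ≤ k)
    (hrs : rs = Real.sqrt (ra ^ 2 - 1 / k ^ 2))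
    (Λ : ℝ → ℝ → ℝ)
    (hΛ_out : ∀ r θ, rs < r →
      Λ r θ = Real.sin θ / r - (k / r) * Real.sqrt (r ^ 2 - rs ^ 2))
    (raε : ℝ → ℝ)
    (hraε : ∀ ε, raε ε =
      (ε + Real.sqrt (k ^ 2 * ra ^ 2 * (k ^ 2 - ε ^ 2) + ε ^ 2)) / (k ^ 2 - ε ^ 2)) :
    (∀ ε : ℝ, 0 < ε → ε < k →
      (∀ r, raε ε ≤ r → ∀ θ : ℝ,
        Λ r θ ≤ (1 / r) * (1 - k * Real.sqrt (r ^ 2 - rs ^ 2)) ∧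
        (1 / r) * (1 - k * Real.sqrt (r ^ 2 - rs ^ 2)) ≤ -ε) ∧
      ra < raε ε) ∧
    Filter.Tendsto raε (nhdsWithin 0 (Set.Ioi 0)) (nhds ra) := by
  have hrs_sq : k ^ 2 * rs ^ 2 = k ^ 2 * ra ^ 2 - 1 :=
    hrs ▸ mul_sq_sqrt_sq_sub_one_div_sq hk hra hk1
  have hrs_lt_ra : rs < ra :=
    lt_of_pow_lt_pow_left₀ 2 hra.le (by nlinarith [pow_pos hk 2])
  refine ⟨fun ε hε hεk ↦ ?_, ?_⟩
  · have hd : 0 < k ^ 2 - ε ^ 2 := by nlinarith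
    have hD : 0 ≤ k ^ 2 * ra ^ 2 * (k ^ 2 - ε ^ 2) + ε ^ 2 := by positivity
    have hra_lt : ra < raε ε := by
      rw [hraε]
      exact lt_root_of_quadratic_neg hd (by nlinarith)
    refine ⟨fun r hr θ ↦ ?_, hra_lt⟩
    have hr0 : 0 < r := by linarith
    have hq := quadratic_nonneg_of_root_le hd hD (hraε ε ▸ hr)
    have hkey : 1 + ε * r ≤ k * √(r ^ 2 - rs ^ 2) :=
      le_mul_sqrt_of_sq_le hk.le (by nlinarith)
    rw [hΛ_out r θ (by linarith)]
    exact ⟨sin_div_sub_div_mul_le θ hr0, one_div_mul_one_sub_le_neg hr0 hkey⟩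
  · rw [funext hraε]
    exact (tendsto_root_nhds_zero hk.ne' hra.le).mono_left nhdsWithin_le_nhds
end
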